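/- Let δ be a diagonal section of a semilinear quasi-copula (δ(x)/x non-decreasing and (δ(x)/x)' ≤ 1/x a.e.) such that the set {x ∈ (0,1] : (δ(x)/x)' = 0} ∪ {x ∈ (0,1] : (δ(x)/x)' = 1/x} has Lebesgue measure 1. Then δ is an extreme point of the convex set of diagonal sections of semilinear quasi-copulas. -/

import Mathlib

open MeasureTheory

def IsQuasiCopulaDiagonal (d : ℝ → ℝ) : Prop :=
  MonotoneOn d (Set.Icc 0 1) ∧
  (∀ s ∈ Set.Icc (0:ℝ) 1, ∀ t ∈ Set.Icc (0:ℝ) 1, |d s - d t| ≤ 2 * |s - t|) ∧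
  (∀ x ∈ Set.Icc (0:ℝ) 1, 0 ≤ d x ∧ d x ≤ x) ∧ d 1 = 1 ∧
  MonotoneOn (fun x => d x / x) (Set.Ioc (0:ℝ) 1) ∧
  (∀ x₁ x₂ : ℝ, 0 < x₁ → x₁ < x₂ → x₂ ≤ 1 →
    x₁ * ((d x₂ / x₂ - d x₁ / x₁) / (x₂ - x₁)) ≤ 1)

/-- Fundamental inequality for monotone continuous functions: if the derivative equals `K`
almost everywhere on `(a, b]`, then the increment is at least `K * (b - a)`. -/
private lemma mono_ftc {φ : ℝ → ℝ} {a b K : ℝ} (hmono : Monotone φ) (hcont : Continuous φ)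
    (hab : a ≤ b) (hK : 0 ≤ K)
    (hder : ∀ᵐ x ∂(volume.restrict (Set.Ioc a b)), HasDerivAt φ K x) :
    K * (b - a) ≤ φ b - φ a := by
  set μ := hmono.stieltjesFunction.measure with hμ
  have h1 : ∀ᵐ x ∂(volume.restrict (Set.Ioc a b)),
      HasDerivAt φ (Measure.rnDeriv μ volume x).toReal x :=
    ae_restrict_of_ae hmono.ae_hasDerivAt
  have h2 : ∀ᵐ x ∂(volume.restrict (Set.Ioc a b)), Measure.rnDeriv μ volume x < ⊤ :=
    ae_restrict_of_ae (Measure.rnDeriv_lt_top μ volume)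
  have h3 : ∀ᵐ x ∂(volume.restrict (Set.Ioc a b)),
      Measure.rnDeriv μ volume x = ENNReal.ofReal K := by
    filter_upwards [h1, h2, hder] with x hx1 hx2 hxd
    have : (Measure.rnDeriv μ volume x).toReal = K := hx1.unique hxd
    rw [← this, ENNReal.ofReal_toReal hx2.ne]
  have h4 : ∫⁻ x in Set.Ioc a b, Measure.rnDeriv μ volume x ∂volume
      = ENNReal.ofReal K * volume (Set.Ioc a b) := by
    rw [lintegral_congr_ae h3, lintegral_const, Measure.restrict_apply_univ]
  have h5 : ∫⁻ x in Set.Ioc a b, Measure.rnDeriv μ volume x ∂volume ≤ μ (Set.Ioc a b) := by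
    rw [← withDensity_apply _ measurableSet_Ioc]
    exact Measure.withDensity_rnDeriv_le μ volume _
  have h6 : μ (Set.Ioc a b) = ENNReal.ofReal (φ b - φ a) := by
    rw [hμ, StieltjesFunction.measure_Ioc]
    congr 1
    have e : ∀ x : ℝ, hmono.stieltjesFunction x = φ x := by
      intro x
      rw [hmono.stieltjesFunction_eq]
      exact rightLim_eq_of_tendsto
        ((hcont.tendsto x).mono_left nhdsWithin_le_nhds)
    rw [e, e]
  have h7 : ENNReal.ofReal (K * (b - a)) ≤ ENNReal.ofReal (φ b - φ a) := by
    rw [ENNReal.ofReal_mul hK, ← Real.volume_Ioc, ← h6]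
    exact h4 ▸ h5
  exact (ENNReal.ofReal_le_ofReal_iff (sub_nonneg.2 (hmono hab))).1 h7

private lemma incr_le {f : ℝ → ℝ}
    (hc : ∀ x₁ x₂ : ℝ, 0 < x₁ → x₁ < x₂ → x₂ ≤ 1 → x₁ * ((f x₂ / x₂ - f x₁ / x₁) / (x₂ - x₁)) ≤ 1)
    {p q : ℝ} (hp : 0 < p) (hpq : p < q) (hq : q ≤ 1) :
    f q / q - f p / p ≤ (q - p) / p := by
  have h := hc p q hp hpq hq
  rw [mul_div_assoc'] at h
  have h2 : p * (f q / q - f p / p) ≤ q - p := (div_le_one (sub_pos.2 hpq)).1 h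
  rw [le_div_iff₀ hp]
  linarith [h2]

private lemma slope_nonneg' {f : ℝ → ℝ} (hm : MonotoneOn (fun t => f t / t) (Set.Ioc 0 1))
    {x u : ℝ} (hx : x ∈ Set.Ioc (0:ℝ) 1) (hu : u ∈ Set.Ioc (0:ℝ) 1) :
    0 ≤ slope (fun t => f t / t) x u := by
  rcases lt_trichotomy u x with h | h | h
  · rw [slope_comm, slope_def_field]
    exact div_nonneg (sub_nonneg.2 (hm hu hx h.le)) (sub_nonneg.2 h.le)
  · simp [h, slope_def_field]
  · rw [slope_def_field]
    exact div_nonneg (sub_nonneg.2 (hm hx hu h.le)) (sub_nonneg.2 h.le)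

private lemma slope_le' {f : ℝ → ℝ}
    (hc : ∀ x₁ x₂ : ℝ, 0 < x₁ → x₁ < x₂ → x₂ ≤ 1 → x₁ * ((f x₂ / x₂ - f x₁ / x₁) / (x₂ - x₁)) ≤ 1)
    {x u : ℝ} (hx : x ∈ Set.Ioc (0:ℝ) 1) (hu : u ∈ Set.Ioc (0:ℝ) 1) :
    slope (fun t => f t / t) x u ≤ 1 / min u x := by
  rcases lt_trichotomy u x with h | h | h
  · rw [slope_comm, slope_def_field, min_eq_left h.le]
    have := incr_le hc hu.1 h hx.2
    rw [div_le_div_iff₀ (sub_pos.2 h) hu.1, one_mul]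
    have h2 : (f x / x - f u / u) * u ≤ (x - u) / u * u :=
      mul_le_mul_of_nonneg_right this hu.1.le
    rwa [div_mul_cancel₀ _ hu.1.ne'] at h2
  · rw [h, min_self]
    simp only [slope_def_field, sub_self, div_zero, zero_div]
    exact div_nonneg zero_le_one hx.1.le
  · rw [slope_def_field, min_eq_right h.le]
    have := incr_le hc hx.1 h hu.2
    rw [div_le_div_iff₀ (sub_pos.2 h) hx.1, one_mul]
    have h2 : (f u / u - f x / x) * x ≤ (u - x) / x * x :=
      mul_le_mul_of_nonneg_right this hx.1.le
    rwa [div_mul_cancel₀ _ hx.1.ne'] at h2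

private lemma slope_combo {α : ℝ} {d d₁ d₂ : ℝ → ℝ}
    (hcomb : ∀ t ∈ Set.Icc (0:ℝ) 1, d t = α * d₁ t + (1 - α) * d₂ t)
    {x u : ℝ} (hx : x ∈ Set.Ioc (0:ℝ) 1) (hu : u ∈ Set.Ioc (0:ℝ) 1) :
    slope (fun t => d t / t) x u
      = α * slope (fun t => d₁ t / t) x u + (1 - α) * slope (fun t => d₂ t / t) x u := by
  simp only [slope_def_field]
  rw [hcomb x ⟨hx.1.le, hx.2⟩, hcomb u ⟨hu.1.le, hu.2⟩]
  rcases eq_or_ne u x with rfl | h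
  · simp
  · field_simp
    ring

private lemma deriv_transfer_one {α : ℝ} (hα0 : 0 < α) (hα1 : α < 1)
    {d d₁ d₂ : ℝ → ℝ}
    (hcomb : ∀ t ∈ Set.Icc (0:ℝ) 1, d t = α * d₁ t + (1 - α) * d₂ t)
    (h1m : MonotoneOn (fun t => d₁ t / t) (Set.Ioc 0 1))
    (h2m : MonotoneOn (fun t => d₂ t / t) (Set.Ioc 0 1))
    (h1c : ∀ x₁ x₂ : ℝ, 0 < x₁ → x₁ < x₂ → x₂ ≤ 1 →
      x₁ * ((d₁ x₂ / x₂ - d₁ x₁ / x₁) / (x₂ - x₁)) ≤ 1)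
    (h2c : ∀ x₁ x₂ : ℝ, 0 < x₁ → x₁ < x₂ → x₂ ≤ 1 →
      x₁ * ((d₂ x₂ / x₂ - d₂ x₁ / x₁) / (x₂ - x₁)) ≤ 1)
    {x y : ℝ} (hx : x ∈ Set.Ioo (0:ℝ) 1)
    (hder : HasDerivAt (fun t => d t / t) y x) (hy : y = 0 ∨ y = 1 / x) :
    HasDerivAt (fun t => d₁ t / t) y x := by
  rw [hasDerivAt_iff_tendsto_slope] at hder ⊢
  have hmem : ∀ᶠ u in nhdsWithin x {x}ᶜ, u ∈ Set.Ioc (0:ℝ) 1 :=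
    Filter.eventually_iff_exists_mem.2 ⟨{x}ᶜ ∩ Set.Ioo 0 1,
      inter_mem_nhdsWithin _ (Ioo_mem_nhds hx.1 hx.2), fun u hu => ⟨hu.2.1, hu.2.2.le⟩⟩
  have hx' : x ∈ Set.Ioc (0:ℝ) 1 := ⟨hx.1, hx.2.le⟩
  rcases hy with rfl | rfl
  · apply tendsto_of_tendsto_of_tendsto_of_le_of_le' tendsto_const_nhds
      (by simpa using hder.const_mul (1/α))
    · filter_upwards [hmem] with u hu
      exact slope_nonneg' h1m hx' hu
    · filter_upwards [hmem] with u hu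
      have hc := slope_combo hcomb hx' hu
      have h2 := slope_nonneg' h2m hx' hu
      rw [hc, ← sub_nonneg]
      have e : α⁻¹ * (α * slope (fun t => d₁ t / t) x u
          + (1 - α) * slope (fun t => d₂ t / t) x u)
          - slope (fun t => d₁ t / t) x u = (1-α)/α * slope (fun t => d₂ t / t) x u := by
        field_simp
        ring
      rw [e]
      exact mul_nonneg (div_nonneg (by linarith) hα0.le) h2
  · have hmin : Filter.Tendsto (fun u : ℝ => min u x) (nhdsWithin x {x}ᶜ) (nhds x) := by
      have h0 : Filter.Tendsto (fun u : ℝ => min u x) (nhds x) (nhds (min x x)) :=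
        Filter.tendsto_id.min tendsto_const_nhds
      rw [min_self] at h0
      exact h0.mono_left nhdsWithin_le_nhds
    have hU : Filter.Tendsto (fun u : ℝ => 1 / min u x) (nhdsWithin x {x}ᶜ) (nhds (1/x)) :=
      tendsto_const_nhds.div hmin hx.1.ne'
    have hLlim : (1/x - (1-α)*(1/x))/α = 1/x := by field_simp; ring
    have hL : Filter.Tendsto (fun u : ℝ => (slope (fun t => d t / t) x u
        - (1-α)*(1/min u x))/α) (nhdsWithin x {x}ᶜ) (nhds (1/x)) := by
      have := (hder.sub (hU.const_mul (1-α))).div_const α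
      rwa [hLlim] at this
    apply tendsto_of_tendsto_of_tendsto_of_le_of_le' hL hU
    · filter_upwards [hmem] with u hu
      have hc := slope_combo hcomb hx' hu
      have hs2 : slope (fun t => d₂ t / t) x u ≤ 1 / min u x := slope_le' h2c hx' hu
      rw [div_le_iff₀ hα0, hc]
      nlinarith [mul_le_mul_of_nonneg_left hs2 (by linarith : (0:ℝ) ≤ 1 - α)]
    · filter_upwards [hmem] with u hu
      exact slope_le' h1c hx' hu

theorem extreme_quasi_of_ae_condition (d : ℝ → ℝ) (hd : IsQuasiCopulaDiagonal d)
    (hfull : volume {x : ℝ | x ∈ Set.Ioc (0:ℝ) 1 ∧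
      ∃ y : ℝ, HasDerivAt (fun t => d t / t) y x ∧ (y = 0 ∨ y = 1 / x)} = 1) :
    ∀ α ∈ Set.Ioo (0:ℝ) 1, ∀ d₁ d₂ : ℝ → ℝ,
      IsQuasiCopulaDiagonal d₁ → IsQuasiCopulaDiagonal d₂ →
      (∀ x ∈ Set.Icc (0:ℝ) 1, d x = α * d₁ x + (1 - α) * d₂ x) →
      ∀ x ∈ Set.Icc (0:ℝ) 1, d₁ x = d₂ x := by
  rintro α ⟨hα0, hα1⟩ d₁ d₂ hd₁ hd₂ hcomb x hx
  obtain ⟨h1mono, h1lip, h1bd, h1one, h1hm, h1c⟩ := hd₁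
  obtain ⟨h2mono, h2lip, h2bd, h2one, h2hm, h2c⟩ := hd₂
  rcases eq_or_lt_of_le hx.1 with h0 | h0
  · -- x = 0
    have e1 := h1bd 0 ⟨le_rfl, zero_le_one⟩
    have e2 := h2bd 0 ⟨le_rfl, zero_le_one⟩
    rw [← h0]
    rw [le_antisymm e1.2 e1.1, le_antisymm e2.2 e2.1]
  rcases eq_or_lt_of_le hx.2 with h1 | h1
  · rw [h1, h1one, h2one]
  -- x ∈ Ioo 0 1 now
  set S := {t : ℝ | t ∈ Set.Ioc (0:ℝ) 1 ∧
      ∃ y : ℝ, HasDerivAt (fun s => d s / s) y t ∧ (y = 0 ∨ y = 1 / t)} with hS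
  -- S is measurable
  have hmeasS : MeasurableSet S := by
    have hSeq : S = Set.Ioc 0 1 ∩ ({t | DifferentiableAt ℝ (fun s => d s / s) t} ∩
        ({t | deriv (fun s => d s / s) t = 0} ∪ {t | deriv (fun s => d s / s) t = 1/t})) := by
      ext t
      simp only [hS, Set.mem_inter_iff, Set.mem_setOf_eq, Set.mem_union]
      constructor
      · rintro ⟨ht, y, hdy, hy⟩
        refine ⟨ht, hdy.differentiableAt, ?_⟩
        rw [hdy.deriv]; exact hy
      · rintro ⟨ht, hdiff, hy⟩
        exact ⟨ht, deriv (fun s => d s / s) t, hdiff.hasDerivAt, hy⟩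
    rw [hSeq]
    refine measurableSet_Ioc.inter ((measurableSet_of_differentiableAt ℝ _).inter ?_)
    have m1 : MeasurableSet {t : ℝ | deriv (fun s => d s / s) t = 0} := by
      have := (measurable_deriv (fun s : ℝ => d s / s)) (MeasurableSet.singleton (0:ℝ))
      simpa [Set.preimage] using this
    have m2 : MeasurableSet {t : ℝ | deriv (fun s => d s / s) t = 1/t} := by
      have hm : Measurable fun t : ℝ => deriv (fun s : ℝ => d s / s) t - 1/t :=
        (measurable_deriv _).sub (measurable_const.div measurable_id)
      have := hm (MeasurableSet.singleton (0:ℝ))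
      have he : {t : ℝ | deriv (fun s => d s / s) t = 1/t}
          = (fun t : ℝ => deriv (fun s : ℝ => d s / s) t - 1/t) ⁻¹' {0} := by
        ext t; simp [sub_eq_zero]
      rw [he]; exact this
    exact m1.union m2
  -- a.e. membership in S on (0,1]
  have hae : ∀ᵐ t ∂(volume.restrict (Set.Ioc (0:ℝ) 1)), t ∈ S := by
    have hsub : S ⊆ Set.Ioc 0 1 := fun t ht => ht.1
    have hnull : volume (Set.Ioc (0:ℝ) 1 \ S) = 0 := by
      rw [measure_diff hsub hmeasS.nullMeasurableSet (by rw [hS] at hfull ⊢; rw [hfull]; exact ENNReal.one_ne_top),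
        Real.volume_Ioc]
      rw [hS] at hfull ⊢
      rw [hfull]
      norm_num
    rw [ae_iff]
    rw [Measure.restrict_apply₀' measurableSet_Ioc.nullMeasurableSet]
    refine measure_mono_null ?_ hnull
    intro t ht
    simp only [Set.mem_inter_iff, Set.mem_setOf_eq] at ht
    exact ⟨ht.2, ht.1⟩
  -- a.e. derivative of the difference is 0
  have hg : ∀ᵐ t ∂(volume.restrict (Set.Ioc (0:ℝ) 1)), t ∈ Set.Ioo (0:ℝ) 1 →
      HasDerivAt (fun s => d₁ s / s - d₂ s / s) 0 t := by
    filter_upwards [hae] with t ht hto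
    obtain ⟨_, y, hdy, hy⟩ := ht
    have H1 : HasDerivAt (fun s => d₁ s / s) y t :=
      deriv_transfer_one hα0 hα1 hcomb h1hm h2hm h1c h2c hto hdy hy
    have H2 : HasDerivAt (fun s => d₂ s / s) y t := by
      refine deriv_transfer_one (α := 1 - α) (by linarith) (by linarith)
        (d := d) (d₁ := d₂) (d₂ := d₁) ?_ h2hm h1hm h2c h1c hto hdy hy
      intro s hs; rw [hcomb s hs]; ring
    have H3 := H1.sub H2
    rw [sub_self] at H3
    exact H3
  -- setup clamped functions on [x, 1]
  set a := x with ha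
  have ha0 : (0:ℝ) < a := h0
  have ha1 : a < 1 := h1
  set K := 1/a with hK
  have hK0 : 0 < K := by rw [hK]; positivity
  set c := fun t : ℝ => max a (min t 1) with hc
  set g := fun s : ℝ => d₁ s / s - d₂ s / s with hgdef
  have hcmem : ∀ t, c t ∈ Set.Icc a 1 :=
    fun t => ⟨le_max_left _ _, max_le ha1.le (min_le_right _ _)⟩
  have hcid : ∀ t ∈ Set.Icc a 1, c t = t := by
    intro t ht
    rw [hc]
    simp only
    rw [min_eq_left ht.2, max_eq_right ht.1]
  have hcmono : Monotone c := fun s t hst => max_le_max le_rfl (min_le_min hst le_rfl)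
  have hclip : ∀ s t : ℝ, s ≤ t → c t - c s ≤ t - s := by
    intro s t hst
    simp only [hc, max_def, min_def]
    split_ifs <;> linarith
  -- increment bounds for g ∘ c
  have hkey : ∀ s t : ℝ, s ≤ t →
      g (c t) - g (c s) ≤ K * (t - s) ∧ g (c s) - g (c t) ≤ K * (t - s) := by
    intro s t hst
    have hp := hcmem s
    have hq := hcmem t
    have hpq := hcmono hst
    have hp0 : 0 < c s := lt_of_lt_of_le ha0 hp.1
    have hq0 : 0 < c t := lt_of_lt_of_le ha0 hq.1
    have hlip := hclip s t hst
    rcases eq_or_lt_of_le hpq with he | hlt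
    · rw [hgdef]; simp only [← he]
      constructor <;> nlinarith
    · have i1 := incr_le h1c hp0 hlt hq.2
      have i2 := incr_le h2c hp0 hlt hq.2
      have n1 : 0 ≤ d₁ (c t) / c t - d₁ (c s) / c s :=
        sub_nonneg.2 (h1hm ⟨hp0, hp.2⟩ ⟨hq0, hq.2⟩ hpq)
      have n2 : 0 ≤ d₂ (c t) / c t - d₂ (c s) / c s :=
        sub_nonneg.2 (h2hm ⟨hp0, hp.2⟩ ⟨hq0, hq.2⟩ hpq)
      have hb : (c t - c s) / c s ≤ K * (t - s) := by
        have hb1 : (c t - c s) / c s ≤ (c t - c s) / a := by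
          gcongr
          · exact hp.1
        have hb2 : (c t - c s) / a ≤ (t - s) / a := by gcongr
        have hb3 : (t - s) / a = K * (t - s) := by rw [hK]; ring
        linarith
      constructor
      · rw [hgdef]
        simp only
        linarith
      · rw [hgdef]
        simp only
        linarith
  -- monotonicity of the two auxiliary functions
  have hmono_m : Monotone (fun t => K * t - g (c t)) := by
    intro s t hst
    have h := (hkey s t hst).1
    rw [mul_sub] at h
    simp only
    linarith
  have hmono_p : Monotone (fun t => K * t + g (c t)) := by
    intro s t hst
    have h := (hkey s t hst).2
    rw [mul_sub] at h
    simp only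
    linarith
  -- continuity
  have hd1cont : ContinuousOn (fun s => d₁ s / s) (Set.Icc a 1) := by
    refine ContinuousOn.div ?_ continuousOn_id (fun s hs => (lt_of_lt_of_le ha0 hs.1).ne')
    have hl : LipschitzOnWith 2 d₁ (Set.Icc 0 1) := by
      refine LipschitzOnWith.of_dist_le_mul fun p hp q hq => ?_
      rw [Real.dist_eq, Real.dist_eq]
      simpa using h1lip p hp q hq
    exact hl.continuousOn.mono (Set.Icc_subset_Icc ha0.le le_rfl)
  have hd2cont : ContinuousOn (fun s => d₂ s / s) (Set.Icc a 1) := by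
    refine ContinuousOn.div ?_ continuousOn_id (fun s hs => (lt_of_lt_of_le ha0 hs.1).ne')
    have hl : LipschitzOnWith 2 d₂ (Set.Icc 0 1) := by
      refine LipschitzOnWith.of_dist_le_mul fun p hp q hq => ?_
      rw [Real.dist_eq, Real.dist_eq]
      simpa using h2lip p hp q hq
    exact hl.continuousOn.mono (Set.Icc_subset_Icc ha0.le le_rfl)
  have hgcont : ContinuousOn g (Set.Icc a 1) := hd1cont.sub hd2cont
  have hccont : Continuous c := continuous_const.max (continuous_id.min continuous_const)
  have hgc : Continuous (fun t => g (c t)) := hgcont.comp_continuous hccont hcmem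
  have hcont_m : Continuous (fun t => K * t - g (c t)) :=
    (continuous_const.mul continuous_id).sub hgc
  have hcont_p : Continuous (fun t => K * t + g (c t)) :=
    (continuous_const.mul continuous_id).add hgc
  -- a.e. derivative of the auxiliary functions on (a, 1]
  have hgrestr : ∀ᵐ t ∂(volume.restrict (Set.Ioc a 1)), t ∈ Set.Ioo (0:ℝ) 1 →
      HasDerivAt g 0 t :=
    ae_restrict_of_ae_restrict_of_subset (Set.Ioc_subset_Ioc ha0.le le_rfl) hg
  have hne1 : ∀ᵐ t : ℝ ∂(volume.restrict (Set.Ioc a 1)), t ≠ 1 := by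
    refine ae_restrict_of_ae ?_
    rw [ae_iff]
    have he : {t : ℝ | ¬ t ≠ 1} = {1} := by ext t; simp
    rw [he]
    exact measure_singleton 1
  have haederiv : ∀ᵐ t ∂(volume.restrict (Set.Ioc a 1)),
      HasDerivAt g 0 t ∧ t ∈ Set.Ioo a 1 := by
    filter_upwards [hgrestr, ae_restrict_mem measurableSet_Ioc, hne1] with t hgt ht hne
    have hto : t ∈ Set.Ioo a 1 := ⟨ht.1, lt_of_le_of_ne ht.2 hne⟩
    exact ⟨hgt ⟨lt_trans ha0 hto.1, hto.2⟩, hto⟩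
  have haeK_m : ∀ᵐ t ∂(volume.restrict (Set.Ioc a 1)),
      HasDerivAt (fun u => K * u - g (c u)) K t := by
    filter_upwards [haederiv] with t ⟨hgt, hto⟩
    have hder : HasDerivAt (fun u => K * u - g u) (K * 1 - 0) t :=
      ((hasDerivAt_id t).const_mul K).sub hgt
    have heq : (fun u => K * u - g (c u)) =ᶠ[nhds t] (fun u => K * u - g u) := by
      filter_upwards [Ioo_mem_nhds hto.1 hto.2] with u hu
      rw [hcid u ⟨hu.1.le, hu.2.le⟩]
    simpa using hder.congr_of_eventuallyEq heq
  have haeK_p : ∀ᵐ t ∂(volume.restrict (Set.Ioc a 1)),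
      HasDerivAt (fun u => K * u + g (c u)) K t := by
    filter_upwards [haederiv] with t ⟨hgt, hto⟩
    have hder : HasDerivAt (fun u => K * u + g u) (K * 1 + 0) t :=
      ((hasDerivAt_id t).const_mul K).add hgt
    have heq : (fun u => K * u + g (c u)) =ᶠ[nhds t] (fun u => K * u + g u) := by
      filter_upwards [Ioo_mem_nhds hto.1 hto.2] with u hu
      rw [hcid u ⟨hu.1.le, hu.2.le⟩]
    simpa using hder.congr_of_eventuallyEq heq
  -- apply the FTC inequality
  have F1 := mono_ftc hmono_m hcont_m ha1.le hK0.le haeK_m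
  have F2 := mono_ftc hmono_p hcont_p ha1.le hK0.le haeK_p
  have hc1 : c 1 = 1 := hcid 1 ⟨ha1.le, le_rfl⟩
  have hca : c a = a := hcid a ⟨le_rfl, ha1.le⟩
  simp only [hc1, hca] at F1 F2
  have hga : g a = g 1 := by linarith
  have hg1 : g 1 = 0 := by
    rw [hgdef]
    simp only
    rw [h1one, h2one]
    norm_num
  have hgx : d₁ a / a = d₂ a / a := by
    have : g a = 0 := hga.trans hg1
    rw [hgdef] at this
    simp only at this
    linarith
  rw [div_eq_div_iff ha0.ne' ha0.ne'] at hgx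
  exact mul_right_cancel₀ ha0.ne' hgx
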